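/- Let X be a separable Banach space and let f = (f_j)_{j≥0} be an X-valued conditionally symmetric martingale relative to a filtration (F_j)_{j≥0} with F_0 trivial. Define the filtration (G_j)_{j≥0} by G_j = σ(d_0, d_1, …, d_j, ‖d_{j+1}‖), where d_0 = f_0. Then f is also a martingale relative to (G_j)_{j≥0}; in particular, each f_j is G_j-measurable and E[f_{j+1} | G_j] = f_j for every j ≥ 0, so the sequence (‖d_j‖)_{j≥1} is predictable relative to (G_j). -/

import Mathlib

open MeasureTheory
open scoped ENNReal NNReal

/-- A martingale (given by its sequence `f`) is conditionally symmetric: for every `j ≥ 1`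
and every bounded continuous `φ : X^j → ℝ`,
`E φ(d_1,…,d_{j−1},d_j) = E φ(d_1,…,d_{j−1},−d_j)`, where `d_k = f_k − f_{k−1}`. -/
def CondSymmetric {Ω : Type*} [MeasurableSpace Ω] (μ : Measure Ω)
    {X : Type*} [NormedAddCommGroup X] (f : ℕ → Ω → X) : Prop :=
  ∀ j : ℕ, ∀ φ : (Fin (j + 1) → X) → ℝ, Continuous φ → (∃ C, ∀ v, |φ v| ≤ C) →
    (∫ ω, φ (fun i => f ((i : ℕ) + 1) ω - f (i : ℕ) ω) ∂μ) =
    (∫ ω, φ (fun i => if (i : ℕ) = j then -(f ((i : ℕ) + 1) ω - f (i : ℕ) ω)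
        else f ((i : ℕ) + 1) ω - f (i : ℕ) ω) ∂μ)

/-!
The heart of the matter is that `E[1_s d_{j+1}] = 0` for `s ∈ G_j`. By conditional symmetry
the law of `(d_1, …, d_{j+1})` is invariant under `d_{j+1} ↦ -d_{j+1}`; this flip fixes
`(d_1, …, d_j, ‖d_{j+1}‖)`, which generates `G_j` because `f_0` is constant, and it changes the
sign of `1_s d_{j+1}`. Hence `E[1_s d_{j+1}] = -E[1_s d_{j+1}]`.
-/

open scoped BoundedContinuousFunction

section

variable {Ω α X : Type*} {m : MeasurableSpace Ω} {μ : Measure Ω} [MeasurableSpace α]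

theorem map_eq_map_of_forall_integral_comp_eq [IsFiniteMeasure μ] [TopologicalSpace α]
    [HasOuterApproxClosed α] [BorelSpace α] {D D' : Ω → α} (hD : Measurable D)
    (hD' : Measurable D') (h : ∀ φ : α →ᵇ ℝ, ∫ ω, φ (D ω) ∂μ = ∫ ω, φ (D' ω) ∂μ) :
    μ.map D = μ.map D' :=
  ext_of_forall_integral_eq_of_IsFiniteMeasure fun φ => by
    rw [integral_map hD.aemeasurable φ.continuous.aestronglyMeasurable,
      integral_map hD'.aemeasurable φ.continuous.aestronglyMeasurable, h]

variable [NormedAddCommGroup X] [NormedSpace ℝ X]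

theorem setIntegral_preimage_eq_zero_of_map_comp_eq {D : Ω → α} {σ : α → α}
    (hD : Measurable D) (hσ : Measurable σ) (hlaw : μ.map (σ ∘ D) = μ.map D)
    {A : Set α} (hA : MeasurableSet A) (hσA : σ ⁻¹' A = A)
    {h : α → X} (hh : StronglyMeasurable h) (hhσ : ∀ x, h (σ x) = -h x) :
    ∫ ω in D ⁻¹' A, h (D ω) ∂μ = 0 := by
  have := IsAddTorsionFree.of_isTorsionFree ℝ X
  refine self_eq_neg.mp ?_
  calc ∫ ω in D ⁻¹' A, h (D ω) ∂μ = ∫ x in A, h x ∂μ.map D :=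
        (setIntegral_map hA hh.aestronglyMeasurable hD.aemeasurable).symm
    _ = ∫ x in A, h x ∂μ.map (σ ∘ D) := by rw [hlaw]
    _ = ∫ ω in D ⁻¹' A, h (σ (D ω)) ∂μ := by
        rw [setIntegral_map hA hh.aestronglyMeasurable (hσ.comp hD).aemeasurable,
          Set.preimage_comp, hσA]
        rfl
    _ = -∫ ω in D ⁻¹' A, h (D ω) ∂μ := by simp only [hhσ, integral_neg]

end

section

variable {Ω X : Type*} {m : MeasurableSpace Ω} {μ : Measure Ω} [NormedAddCommGroup X]

/-- `(d_1, …, d_{j+1})`, indexed from `0`. -/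
def increments (f : ℕ → Ω → X) (j : ℕ) (ω : Ω) : Fin (j + 1) → X :=
  fun i => f (i + 1) ω - f i ω

def flipLast (j : ℕ) (x : Fin (j + 1) → X) : Fin (j + 1) → X :=
  fun i => if (i : ℕ) = j then -x i else x i

theorem continuous_flipLast (j : ℕ) : Continuous (flipLast (X := X) j) :=
  continuous_pi fun i => .if_const _ (continuous_apply i).neg (continuous_apply i)

theorem flipLast_last (j : ℕ) (x : Fin (j + 1) → X) :
    flipLast j x (Fin.last j) = -x (Fin.last j) := if_pos rfl

theorem init_flipLast (j : ℕ) (x : Fin (j + 1) → X) : Fin.init (flipLast j x) = Fin.init x :=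
  funext fun i => if_neg i.isLt.ne

theorem measurable_increments [MeasurableSpace X] [BorelSpace X] [SecondCountableTopology X]
    {f : ℕ → Ω → X} (hf : ∀ i, Measurable (f i)) (j : ℕ) : Measurable (increments f j) :=
  measurable_pi_lambda _ fun _ => (hf _).sub (hf _)

theorem CondSymmetric.map_flipLast_increments [IsFiniteMeasure μ] [MeasurableSpace X]
    [BorelSpace X] [SecondCountableTopology X] {f : ℕ → Ω → X}
    (hsymm : CondSymmetric μ f) (hf : ∀ i, Measurable (f i)) (j : ℕ) :
    μ.map (flipLast j ∘ increments f j) = μ.map (increments f j) := by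
  have hD := measurable_increments hf j
  refine (map_eq_map_of_forall_integral_comp_eq hD
    ((continuous_flipLast j).measurable.comp hD) fun φ => ?_).symm
  exact hsymm j φ φ.continuous ⟨‖φ‖, fun v => φ.norm_coe_le_norm v⟩

theorem CondSymmetric.setIntegral_increment_eq_zero [IsFiniteMeasure μ] [NormedSpace ℝ X]
    [MeasurableSpace X] [BorelSpace X] [SecondCountableTopology X] {f : ℕ → Ω → X}
    (hsymm : CondSymmetric μ f) (hf : ∀ i, Measurable (f i)) (j : ℕ) {s : Set Ω}
    (hs : MeasurableSet[MeasurableSpace.comap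
      (fun ω => ((fun i : Fin j => f (i + 1) ω - f i ω), ‖f (j + 1) ω - f j ω‖)) inferInstance] s) :
    ∫ ω in s, (f (j + 1) ω - f j ω) ∂μ = 0 := by
  obtain ⟨B, hB, rfl⟩ := hs
  let T : (Fin (j + 1) → X) → (Fin j → X) × ℝ := fun x => (Fin.init x, ‖x (Fin.last j)‖)
  have hT : Measurable T :=
    (measurable_pi_lambda _ fun _ => measurable_pi_apply _).prodMk (measurable_pi_apply _).norm
  have hTflip : flipLast j ⁻¹' (T ⁻¹' B) = T ⁻¹' B := by
    ext x
    simp only [Set.mem_preimage, T, init_flipLast, flipLast_last, norm_neg]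
  exact setIntegral_preimage_eq_zero_of_map_comp_eq (measurable_increments hf j)
    (continuous_flipLast j).measurable (hsymm.map_flipLast_increments hf j) (hT hB) hTflip
    (measurable_pi_apply (Fin.last j)).stronglyMeasurable (flipLast_last j)

/-- `G_j = σ(f_0, d_1, …, d_j, ‖d_{j+1}‖)`. -/
abbrev enlargedSigmaAlgebra [MeasurableSpace X] (f : ℕ → Ω → X) (j : ℕ) : MeasurableSpace Ω :=
  (MeasurableSpace.comap (f 0) ‹_› ⊔
    ⨆ i ∈ Finset.Icc 1 j, MeasurableSpace.comap (fun ω => f i ω - f (i - 1) ω) ‹_›) ⊔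
    MeasurableSpace.comap (fun ω => ‖f (j + 1) ω - f j ω‖) inferInstance

section enlargedSigmaAlgebra

variable [MeasurableSpace X] (f : ℕ → Ω → X)

theorem measurable_norm_increment_enlargedSigmaAlgebra (j : ℕ) :
    Measurable[enlargedSigmaAlgebra f j] fun ω => ‖f (j + 1) ω - f j ω‖ :=
  Measurable.of_comap_le le_sup_right

theorem measurable_increment_enlargedSigmaAlgebra_succ (j : ℕ) :
    Measurable[enlargedSigmaAlgebra f (j + 1)] fun ω => f (j + 1) ω - f j ω :=
  Measurable.of_comap_le <| le_sup_of_le_left <| le_sup_of_le_right <|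
    le_iSup₂_of_le (j + 1) (by simp) le_rfl

theorem enlargedSigmaAlgebra_mono [OpensMeasurableSpace X] :
    Monotone (enlargedSigmaAlgebra f) := by
  refine monotone_nat_of_le_succ fun j => sup_le (sup_le ?_ ?_) ?_
  · exact le_sup_of_le_left le_sup_left
  · exact le_sup_of_le_left <| le_sup_of_le_right <| biSup_mono fun i hi =>
      Finset.Icc_subset_Icc_right j.le_succ hi
  · exact (measurable_norm.comp (measurable_increment_enlargedSigmaAlgebra_succ f j)).comap_le

theorem enlargedSigmaAlgebra_le [BorelSpace X] [SecondCountableTopology X] {f : ℕ → Ω → X}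
    (hf : ∀ i, Measurable (f i)) (j : ℕ) : enlargedSigmaAlgebra f j ≤ m :=
  sup_le (sup_le (hf 0).comap_le (iSup₂_le fun i _ => ((hf i).sub (hf (i - 1))).comap_le))
    ((hf (j + 1)).sub (hf j)).norm.comap_le

theorem stronglyMeasurable_enlargedSigmaAlgebra [BorelSpace X] [SecondCountableTopology X]
    (j : ℕ) : StronglyMeasurable[enlargedSigmaAlgebra f j] (f j) := by
  induction j with
  | zero => exact (Measurable.of_comap_le (le_sup_of_le_left le_sup_left)).stronglyMeasurable
  | succ j ih =>
    have hd := (measurable_increment_enlargedSigmaAlgebra_succ f j).stronglyMeasurable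
    have hsum : f j + (fun ω => f (j + 1) ω - f j ω) = f (j + 1) := by ext; simp
    exact hsum ▸ (ih.mono (enlargedSigmaAlgebra_mono f j.le_succ)).add hd

theorem enlargedSigmaAlgebra_le_comap [BorelSpace X] {f : ℕ → Ω → X} {c : X}
    (hc : f 0 = fun _ => c) (j : ℕ) :
    enlargedSigmaAlgebra f j ≤ MeasurableSpace.comap
      (fun ω => ((fun i : Fin j => f (i + 1) ω - f i ω), ‖f (j + 1) ω - f j ω‖)) inferInstance := by
  let S : Ω → (Fin j → X) × ℝ :=
    fun ω => ((fun i => f (i + 1) ω - f i ω), ‖f (j + 1) ω - f j ω‖)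
  have hS : Measurable[MeasurableSpace.comap S inferInstance] S := comap_measurable S
  refine sup_le (sup_le ?_ ?_) ?_
  · simp [hc, MeasurableSpace.comap_const]
  · refine iSup₂_le fun i hi => Measurable.comap_le ?_
    obtain ⟨hi1, hij⟩ := Finset.mem_Icc.mp hi
    obtain ⟨k, rfl⟩ := Nat.exists_eq_add_of_le' hi1
    exact ((measurable_pi_apply (⟨k, hij⟩ : Fin j)).comp measurable_fst).comp hS
  · exact (measurable_snd.comp hS).comap_le

end enlargedSigmaAlgebra

end

theorem cond_symmetric_enlarged_filtration
    {Ω X : Type*} {m : MeasurableSpace Ω} {μ : Measure Ω} [IsProbabilityMeasure μ]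
    [NormedAddCommGroup X] [NormedSpace ℝ X] [CompleteSpace X]
    [TopologicalSpace.SeparableSpace X]
    (ℱ : Filtration ℕ m) (hℱ0 : ℱ 0 = ⊥)
    (f : ℕ → Ω → X) (hf : Martingale f ℱ μ)
    (hsymm : CondSymmetric μ f) :
    ∃ 𝒢 : Filtration ℕ m,
      (∀ j : ℕ, 𝒢 j =
        (MeasurableSpace.comap (f 0) (borel X) ⊔
          ⨆ i ∈ Finset.Icc 1 j, MeasurableSpace.comap (fun ω => f i ω - f (i - 1) ω) (borel X)) ⊔
          MeasurableSpace.comap (fun ω => ‖f (j + 1) ω - f j ω‖) (borel ℝ)) ∧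
      Martingale f 𝒢 μ ∧
      (∀ j : ℕ, StronglyMeasurable[𝒢 j] (f j)) ∧
      (∀ j : ℕ, μ[f (j + 1) | 𝒢 j] =ᵐ[μ] f j) ∧
      (∀ j : ℕ, Measurable[𝒢 j] fun ω => ‖f (j + 1) ω - f j ω‖) := by
  borelize X
  have : SecondCountableTopology X := UniformSpace.secondCountable_of_separable X
  have hmeas (i : ℕ) : Measurable (f i) := ((hf.stronglyMeasurable i).mono (ℱ.le i)).measurable
  obtain ⟨c, hc⟩ : ∃ c, f 0 = fun _ => c :=
    stronglyMeasurable_bot_iff.mp (hℱ0 ▸ hf.stronglyMeasurable 0)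
  let 𝒢 : Filtration ℕ m :=
    ⟨enlargedSigmaAlgebra f, enlargedSigmaAlgebra_mono f, enlargedSigmaAlgebra_le hmeas⟩
  have hadapted : StronglyAdapted 𝒢 f := stronglyMeasurable_enlargedSigmaAlgebra f
  have hmart : Martingale f 𝒢 μ := by
    refine martingale_of_setIntegral_eq_succ hadapted hf.integrable fun j s hs => ?_
    have hzero := hsymm.setIntegral_increment_eq_zero hmeas j
      (enlargedSigmaAlgebra_le_comap hc j s hs)
    rw [integral_sub (hf.integrable _).integrableOn (hf.integrable _).integrableOn] at hzero
    exact (sub_eq_zero.mp hzero).symm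
  exact ⟨𝒢, fun j => rfl, hmart, hadapted, fun j => hmart.condExp_ae_eq j.le_succ,
    measurable_norm_increment_enlargedSigmaAlgebra f⟩
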